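/- Let u be a vertex of graph G with core_G(u) = k and superior degree SD(u) ≤ k, and suppose an edge incident to u that is a superior edge for u is deleted (as part of a deleted edge set). Then the core number of u strictly decreases, i.e., core_{G'}(u) < k where G' is the resulting graph. -/

import Mathlib

open SimpleGraph

/-- The core number of a vertex: the largest `k` such that the vertex lies in a
subgraph of `G` with minimum degree at least `k`. -/
noncomputable def coreNumber {V : Type*} (G : SimpleGraph V) (v : V) : ℕ :=
  sSup {k : ℕ | ∃ H : G.Subgraph, v ∈ H.verts ∧ ∀ w ∈ H.verts, k ≤ (H.neighborSet w).ncard}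

/-- The superior degree of `u`: the number of neighbors `v` with `coreNumber G v ≥ coreNumber G u`. -/
noncomputable def SD {V : Type*} (G : SimpleGraph V) (u : V) : ℕ :=
  {v : V | G.Adj u v ∧ coreNumber G u ≤ coreNumber G v}.ncard

/-
Let `G' = G \ S`. Every neighbour `w` of `u` in a subgraph `H ∋ u` of `G'` of
minimum degree `core_{G'}(u)` satisfies `core_G(w) ≥ core_{G'}(w) ≥ core_{G'}(u)`, so
`core_{G'}(u) ≤ SD_{G'}(u)`. If `core_{G'}(u) ≥ k` these neighbours are superior in `G` as
well, and the deleted superior neighbour `v` is a further one, so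
`k < SD_G(u)`, contradicting `SD_G(u) ≤ k`.
-/

section

variable {V : Type*} [Finite V] {G G' : SimpleGraph V}

lemma bddAbove_coreNumber_set (G : SimpleGraph V) (v : V) :
    BddAbove {k : ℕ | ∃ H : G.Subgraph, v ∈ H.verts ∧
      ∀ w ∈ H.verts, k ≤ (H.neighborSet w).ncard} := by
  refine ⟨Nat.card V, ?_⟩
  rintro k ⟨H, hv, hk⟩
  exact (hk v hv).trans (Set.ncard_le_card _)

lemma coreNumber_spec (G : SimpleGraph V) (v : V) :
    ∃ H : G.Subgraph, v ∈ H.verts ∧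
      ∀ w ∈ H.verts, coreNumber G v ≤ (H.neighborSet w).ncard :=
  Nat.sSup_mem (s := {k : ℕ | ∃ H : G.Subgraph, v ∈ H.verts ∧
      ∀ w ∈ H.verts, k ≤ (H.neighborSet w).ncard})
    ⟨0, ⊤, Set.mem_univ v, fun _ _ => Nat.zero_le _⟩ (bddAbove_coreNumber_set G v)

lemma le_coreNumber {H : G.Subgraph} {v : V} {k : ℕ} (hv : v ∈ H.verts)
    (hk : ∀ w ∈ H.verts, k ≤ (H.neighborSet w).ncard) : k ≤ coreNumber G v :=
  le_csSup (bddAbove_coreNumber_set G v) ⟨H, hv, hk⟩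

lemma coreNumber_mono (h : G' ≤ G) (v : V) : coreNumber G' v ≤ coreNumber G v := by
  obtain ⟨H, hv, hdeg⟩ := coreNumber_spec G' v
  let H₂ : G.Subgraph :=
    { verts := H.verts
      Adj := H.Adj
      adj_sub := fun hadj => h (H.adj_sub hadj)
      edge_vert := H.edge_vert
      symm := H.symm }
  exact le_coreNumber (H := H₂) hv hdeg

lemma coreNumber_le_SD (G : SimpleGraph V) (u : V) : coreNumber G u ≤ SD G u := by
  obtain ⟨H, hu, hdeg⟩ := coreNumber_spec G u
  refine (hdeg u hu).trans (Set.ncard_le_ncard fun w hw => ⟨H.adj_sub hw, ?_⟩)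
  exact le_coreNumber (H.edge_vert (H.adj_symm hw)) hdeg

lemma SD_lt_SD_of_superior_not_adj (h : G' ≤ G) {u v : V}
    (hcore : coreNumber G u ≤ coreNumber G' u) (huv : G.Adj u v) (hnot : ¬G'.Adj u v)
    (hv : coreNumber G u ≤ coreNumber G v) : SD G' u < SD G u := by
  have hsub : insert v {w | G'.Adj u w ∧ coreNumber G' u ≤ coreNumber G' w} ⊆
      {w | G.Adj u w ∧ coreNumber G u ≤ coreNumber G w} := by
    rintro w (rfl | ⟨hw, hcw⟩)
    · exact ⟨huv, hv⟩
    · exact ⟨h hw, hcore.trans (hcw.trans (coreNumber_mono h w))⟩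
  calc SD G' u < (insert v {w | G'.Adj u w ∧ coreNumber G' u ≤ coreNumber G' w}).ncard := by
        rw [Set.ncard_insert_of_notMem fun hmem => hnot hmem.1]
        exact Nat.lt_succ_self _
    _ ≤ SD G u := Set.ncard_le_ncard hsub

end

theorem sd_le_core_decreases_on_superior_delete {V : Type*} [Fintype V] (G : SimpleGraph V)
    (S : Set (Sym2 V)) (hSE : S ⊆ G.edgeSet)
    (u : V) (k : ℕ) (hu : coreNumber G u = k) (hsd : SD G u ≤ k)
    (hdel : ∃ e ∈ S, ∃ v : V, e = s(u,v) ∧ coreNumber G u ≤ coreNumber G v) :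
    coreNumber (G.deleteEdges S) u < k := by
  obtain ⟨_, heS, v, rfl, hv⟩ := hdel
  by_contra! hk
  have hlt : SD (G.deleteEdges S) u < SD G u :=
    SD_lt_SD_of_superior_not_adj (deleteEdges_le S) (hu ▸ hk) (hSE heS)
      (fun hadj => ((deleteEdges_adj ..).mp hadj).2 heS) hv
  have := coreNumber_le_SD (G.deleteEdges S) u
  omega
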